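/- If α is a left-computable real number that is not computable, then there is no computable nonincreasing sequence of computable real numbers converging to α. Equivalently: if there exist both a computable nondecreasing sequence converging to α and a computable nonincreasing sequence converging to α, then α is computable. -/

import Mathlib

/-!
If computable sequences `x n ↑ α` and `y n ↓ α` are given, then `x n ≤ α ≤ y n` for every `n`
and `y n - x n → 0`. To approximate `α` within `2 ^ -M`, search for the first `n` at which
rational approximations of `x n` and `y n` to within `2 ^ -(M + 3)` are `2 ^ -(M + 1)`-close:
the search terminates because `y n - x n → 0`, and is effective because comparing rationals
given by computable codes is decidable. The approximation of `x n` found is then within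
`2 ^ -M` of `α`.
-/
open Filter Topology

/-- A computable sequence of rational numbers. -/
def CompRatSeq (r : ℕ → ℚ) : Prop :=
  ∃ a b s : ℕ → ℕ, Computable a ∧ Computable b ∧ Computable s ∧
    (∀ n, b n ≠ 0) ∧ ∀ n, r n = (-1) ^ (s n) * (a n : ℚ) / (b n : ℚ)

/-- A computable double sequence of rational numbers. -/
def CompRatSeq2 (r : ℕ → ℕ → ℚ) : Prop :=
  ∃ a b s : ℕ → ℕ → ℕ, Computable₂ a ∧ Computable₂ b ∧ Computable₂ s ∧
    (∀ n m, b n m ≠ 0) ∧ ∀ n m, r n m = (-1) ^ (s n m) * (a n m : ℚ) / (b n m : ℚ)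

/-- `x` is a computable real: effectively approximable by a computable rational
sequence with a computable modulus of convergence. -/
def ComputableReal (x : ℝ) : Prop :=
  ∃ r : ℕ → ℚ, CompRatSeq r ∧ ∃ e : ℕ → ℕ, Computable e ∧
    ∀ M n : ℕ, e M ≤ n → |x - (r n : ℝ)| < 2 ^ (-(M : ℤ))

/-- A computable sequence of (computable) real numbers: uniformly effectively
approximable by a computable double sequence of rationals. -/
def ComputableRealSeq (x : ℕ → ℝ) : Prop :=
  ∃ r : ℕ → ℕ → ℚ, CompRatSeq2 r ∧ ∃ e : ℕ → ℕ → ℕ, Computable₂ e ∧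
    ∀ n M m : ℕ, e n M ≤ m → |x n - (r n m : ℝ)| < 2 ^ (-(M : ℤ))

section ComputableRat

variable {α : Type*} [Primcodable α]

/-- Signed numerators are split as `p - n` with `p n : ℕ`, so that arithmetic and comparisons
of codes stay inside `ℕ`. -/
def IsComputableRat (r : α → ℚ) : Prop :=
  ∃ p n d : α → ℕ, Computable p ∧ Computable n ∧ Computable d ∧ (∀ x, d x ≠ 0) ∧
    ∀ x, r x = ((p x : ℚ) - n x) / d x

theorem CompRatSeq2.isComputableRat_comp {r : ℕ → ℕ → ℚ} (hr : CompRatSeq2 r) {f g : α → ℕ}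
    (hf : Computable f) (hg : Computable g) : IsComputableRat fun x => r (f x) (g x) := by
  obtain ⟨a, b, s, ha, hb, hs, hb0, hr⟩ := hr
  have hodd : Computable fun x => (s (f x) (g x)).bodd :=
    Computable.nat_bodd.comp (hs.comp hf hg)
  refine ⟨fun x => bif (s (f x) (g x)).bodd then 0 else a (f x) (g x),
    fun x => bif (s (f x) (g x)).bodd then a (f x) (g x) else 0, fun x => b (f x) (g x),
    hodd.cond (Computable.const 0) (ha.comp hf hg),
    hodd.cond (ha.comp hf hg) (Computable.const 0), hb.comp hf hg, fun _ => hb0 _ _, fun x => ?_⟩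
  beta_reduce
  rw [hr, neg_one_pow_eq_pow_mod_two, Nat.mod_two_of_bodd]
  cases (s (f x) (g x)).bodd <;> simp

theorem IsComputableRat.add {r s : α → ℚ} (hr : IsComputableRat r) (hs : IsComputableRat s) :
    IsComputableRat fun x => r x + s x := by
  obtain ⟨p, n, d, hp, hn, hd, hd0, hr⟩ := hr
  obtain ⟨p', n', d', hp', hn', hd', hd0', hs⟩ := hs
  have hmul : Computable₂ ((· * ·) : ℕ → ℕ → ℕ) := Primrec.nat_mul.to_comp
  have hadd : Computable₂ ((· + ·) : ℕ → ℕ → ℕ) := Primrec.nat_add.to_comp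
  refine ⟨fun x => p x * d' x + p' x * d x, fun x => n x * d' x + n' x * d x,
    fun x => d x * d' x, hadd.comp (hmul.comp hp hd') (hmul.comp hp' hd),
    hadd.comp (hmul.comp hn hd') (hmul.comp hn' hd), hmul.comp hd hd',
    fun x => mul_ne_zero (hd0 x) (hd0' x), fun x => ?_⟩
  beta_reduce
  rw [hr, hs, div_add_div _ _ (by exact_mod_cast hd0 x) (by exact_mod_cast hd0' x)]
  push_cast
  ring

theorem isComputableRat_two_zpow_neg {k : α → ℕ} (hk : Computable k) :
    IsComputableRat fun x => (2 : ℚ) ^ (-(k x : ℤ)) := by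
  have hpow : Computable₂ ((· ^ ·) : ℕ → ℕ → ℕ) :=
    (Primrec₂.unpaired'.1 Nat.Primrec.pow).to_comp
  refine ⟨fun _ => 1, fun _ => 0, fun x => 2 ^ k x, Computable.const 1, Computable.const 0,
    hpow.comp (Computable.const 2) hk, fun _ => by positivity, fun x => ?_⟩
  simp [zpow_neg]

theorem IsComputableRat.computablePred_le {r s : α → ℚ} (hr : IsComputableRat r)
    (hs : IsComputableRat s) : ComputablePred fun x => r x ≤ s x := by
  obtain ⟨p, n, d, hp, hn, hd, hd0, hr⟩ := hr
  obtain ⟨p', n', d', hp', hn', hd', hd0', hs⟩ := hs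
  have hmul : Computable₂ ((· * ·) : ℕ → ℕ → ℕ) := Primrec.nat_mul.to_comp
  have hadd : Computable₂ ((· + ·) : ℕ → ℕ → ℕ) := Primrec.nat_add.to_comp
  have hle : Computable₂ fun a b : ℕ => decide (a ≤ b) := Primrec.nat_le.decide.to_comp
  refine ComputablePred.of_eq (p := fun x => p x * d' x + n' x * d x ≤ p' x * d x + n x * d' x)
    ⟨inferInstance, hle.comp (hadd.comp (hmul.comp hp hd') (hmul.comp hn' hd))
      (hadd.comp (hmul.comp hp' hd) (hmul.comp hn hd'))⟩ fun x => ?_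
  have hdpos : (0 : ℚ) < d x := by exact_mod_cast Nat.pos_of_ne_zero (hd0 x)
  have hdpos' : (0 : ℚ) < d' x := by exact_mod_cast Nat.pos_of_ne_zero (hd0' x)
  rw [hr, hs, div_le_div_iff₀ hdpos hdpos', ← Nat.cast_le (α := ℚ)]
  push_cast
  constructor <;> intro h <;> linarith

end ComputableRat

theorem CompRatSeq2.comp {r : ℕ → ℕ → ℚ} (hr : CompRatSeq2 r) {f g : ℕ → ℕ}
    (hf : Computable f) (hg : Computable g) : CompRatSeq fun n => r (f n) (g n) := by
  obtain ⟨a, b, s, ha, hb, hs, hb0, hr⟩ := hr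
  exact ⟨_, _, _, ha.comp hf hg, hb.comp hf hg, hs.comp hf hg, fun _ => hb0 _ _, fun _ => hr _ _⟩

theorem abs_sub_lt_of_mem_Icc_of_approx {a x y x' y' δ η : ℝ} (ha : a ∈ Set.Icc x y)
    (hx : |x - x'| < δ) (hy : |y - y'| < δ) (hη : 0 ≤ η) (h : y' ≤ x' + η) :
    |a - x'| < η + δ := by
  rw [abs_lt] at hx hy ⊢
  constructor <;> linarith [ha.1, ha.2]

theorem exists_le_add_of_tendsto_sub {x y x' y' : ℕ → ℝ} {δ η : ℝ}
    (hlim : Tendsto (fun n => y n - x n) atTop (𝓝 0)) (hx : ∀ n, |x n - x' n| < δ)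
    (hy : ∀ n, |y n - y' n| < δ) (hδη : 2 * δ < η) : ∃ n, y' n ≤ x' n + η := by
  obtain ⟨n, hn⟩ := ((tendsto_order.1 hlim).2 (η - 2 * δ) (by linarith)).exists
  refine ⟨n, ?_⟩
  have hxn := abs_lt.1 (hx n)
  have hyn := abs_lt.1 (hy n)
  linarith [hxn.1, hyn.2]

theorem two_zpow_neg_add (M k : ℕ) :
    (2 : ℝ) ^ (-((M + k : ℕ) : ℤ)) = 2 ^ (-(M : ℤ)) / 2 ^ k := by
  rw [Nat.cast_add, neg_add, zpow_add₀ two_ne_zero, zpow_neg _ (k : ℤ), zpow_natCast,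
    div_eq_mul_inv]

theorem two_mul_two_zpow_neg_add_three_lt (M : ℕ) :
    2 * (2 : ℝ) ^ (-((M + 3 : ℕ) : ℤ)) < 2 ^ (-((M + 1 : ℕ) : ℤ)) := by
  rw [two_zpow_neg_add, two_zpow_neg_add]
  linarith [zpow_pos (two_pos : (0 : ℝ) < 2) (-(M : ℤ))]

theorem two_zpow_neg_add_one_add_two_zpow_neg_add_three_le (M : ℕ) :
    (2 : ℝ) ^ (-((M + 1 : ℕ) : ℤ)) + 2 ^ (-((M + 3 : ℕ) : ℤ)) ≤ 2 ^ (-(M : ℤ)) := by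
  rw [two_zpow_neg_add, two_zpow_neg_add]
  linarith [zpow_pos (two_pos : (0 : ℝ) < 2) (-(M : ℤ))]

/-- `Δ₁ = Σ₁ ∩ Π₁`: if there exist both a computable nondecreasing sequence of
computable reals converging to `α` and a computable nonincreasing one, then `α`
is computable.  Equivalently, for a left-computable non-computable `α` there is
no computable nonincreasing sequence of computable reals converging to `α`. -/
theorem computable_of_incr_and_decr_approx (α : ℝ)
    (hup : ∃ x : ℕ → ℝ, ComputableRealSeq x ∧ Monotone x ∧ Tendsto x atTop (𝓝 α))
    (hdown : ∃ y : ℕ → ℝ, ComputableRealSeq y ∧ Antitone y ∧ Tendsto y atTop (𝓝 α)) :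
    ComputableReal α := by
  obtain ⟨x, ⟨r, hr, e, he, hre⟩, hx_mono, hx_lim⟩ := hup
  obtain ⟨y, ⟨q, hq, f, hf, hqf⟩, hy_anti, hy_lim⟩ := hdown
  set lo : ℕ → ℕ → ℚ := fun M n => r n (e n (M + 3))
  set hi : ℕ → ℕ → ℚ := fun M n => q n (f n (M + 3))
  have hlo M n : |x n - lo M n| < 2 ^ (-((M + 3 : ℕ) : ℤ)) := hre n (M + 3) _ le_rfl
  have hhi M n : |y n - hi M n| < 2 ^ (-((M + 3 : ℕ) : ℤ)) := hqf n (M + 3) _ le_rfl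
  have hfound M : ∃ n, hi M n ≤ lo M n + 2 ^ (-((M + 1 : ℕ) : ℤ)) := by
    obtain ⟨n, hn⟩ := exists_le_add_of_tendsto_sub (by simpa using hy_lim.sub hx_lim) (hlo M)
      (hhi M) (two_mul_two_zpow_neg_add_three_lt M)
    exact ⟨n, (Rat.cast_le (K := ℝ)).1 (by push_cast; exact hn)⟩
  have hshift : Computable fun M : ℕ => M + 3 :=
    (Primrec.nat_add.comp Primrec.id (Primrec.const 3)).to_comp
  have hsearch : Computable fun M => Nat.find (hfound M) := by
    refine Computable.find (IsComputableRat.computablePred_le ?_ ?_) hfound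
    · exact hq.isComputableRat_comp .snd (hf.comp .snd (hshift.comp .fst))
    · exact (hr.isComputableRat_comp .snd (he.comp .snd (hshift.comp .fst))).add
        (isComputableRat_two_zpow_neg (Computable.succ.comp .fst))
  refine ⟨fun M => lo M (Nat.find (hfound M)), hr.comp hsearch (he.comp hsearch hshift), id,
    Computable.id, fun M n hMn => ?_⟩
  set N := Nat.find (hfound n)
  have hN : (hi n N : ℝ) ≤ lo n N + 2 ^ (-((n + 1 : ℕ) : ℤ)) := by
    have h := (Rat.cast_le (K := ℝ)).2 (Nat.find_spec (hfound n))
    push_cast at h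
    exact h
  have hα : α ∈ Set.Icc (x N) (y N) :=
    ⟨hx_mono.ge_of_tendsto hx_lim N, hy_anti.le_of_tendsto hy_lim N⟩
  calc |α - lo n N| < 2 ^ (-((n + 1 : ℕ) : ℤ)) + 2 ^ (-((n + 3 : ℕ) : ℤ)) :=
        abs_sub_lt_of_mem_Icc_of_approx hα (hlo n N) (hhi n N) (by positivity) hN
    _ ≤ 2 ^ (-(n : ℤ)) := two_zpow_neg_add_one_add_two_zpow_neg_add_three_le n
    _ ≤ 2 ^ (-(M : ℤ)) := zpow_le_zpow_right₀ one_le_two (neg_le_neg (Int.ofNat_le.2 hMn))
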